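/- Let α > 0, ρ > 0, and let p_1,...,p_N ∈ [q, 1) with q ∈ (0,1), N ≥ 2. For node ℓ with b_ℓ = e^{ρ}∏_{k≠ℓ}(1-p_k)^{-1}, let p_ℓ^br ∈ (0,1) satisfy e^{-α p_ℓ^br} = p_ℓ^br(1 + 1/b_ℓ). Then for every j ≠ ℓ, the partial derivative of p_ℓ^br with respect to p_j equals e^{-ρ}∏_{k≠ℓ,j}(1-p_k) / ((α + 1/p_ℓ^br)(1 + 1/b_ℓ)), and the sum over j ≠ ℓ of these partial derivatives is at most (N-1)(1-q)^{N-2} / (e^{ρ}(α+1)). -/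

import Mathlib

/-! Along the coordinate `p j`, `j ≠ ℓ`, the best-response equation reads
`exp (-α y) = y * (1 + D * (1 - t))` with `D = exp (-ρ) * ∏_{k ≠ ℓ, j} (1 - p k)`, so implicit
differentiation gives `y' * (α + 1 / y) * (1 + 1 / b) = D`. Each partial derivative is then at most
`exp (-ρ) * (1 - q) ^ (N - 2) / (α + 1)`, since `y ≤ 1`, `1 / b ≥ 0` and `1 - p k ≤ 1 - q`. -/

open Real Set Finset

open Filter Topology in
theorem HasDerivAt.implicit_exp_neg_mul_eq_mul_affine {g : ℝ → ℝ} {g' α D t₀ : ℝ}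
    (hg : HasDerivAt g g' t₀) (hg₀ : g t₀ ≠ 0)
    (heq : ∀ᶠ t in 𝓝 t₀, Real.exp (-α * g t) = g t * (1 + D * (1 - t))) :
    g' * ((α + 1 / g t₀) * (1 + D * (1 - t₀))) = D := by
  have hzero : HasDerivAt (fun t => Real.exp (-α * g t) - g t * (1 + D * (1 - t))) 0 t₀ :=
    (hasDerivAt_const t₀ 0).congr_of_eventuallyEq (heq.mono fun t ht => sub_eq_zero.mpr ht)
  have hrules := ((hg.const_mul (-α)).exp).sub
    (hg.mul (((hasDerivAt_id t₀).const_sub 1).const_mul D |>.const_add 1))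
  have hdiff := hrules.unique hzero
  rw [heq.self_of_nhds, id] at hdiff
  field_simp
  linear_combination -hdiff

theorem Finset.prod_sdiff_singleton_eq_mul_prod_sdiff_pair {ι M : Type*} [DecidableEq ι]
    [CommMonoid M] (s : Finset ι) (f : ι → M) {ℓ j : ι} (hj : j ∈ s) (hjℓ : j ≠ ℓ) :
    ∏ k ∈ s \ {ℓ}, f k = f j * ∏ k ∈ s \ {ℓ, j}, f k := by
  rw [pair_comm, sdiff_insert, mul_prod_erase _ _ (by simp [hj, hjℓ])]

theorem prod_one_sub_le_pow_card {ι : Type*} (s : Finset ι) {p : ι → ℝ} {q : ℝ}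
    (hp : ∀ k ∈ s, p k ∈ Set.Ico q 1) : ∏ k ∈ s, (1 - p k) ≤ (1 - q) ^ #s := by
  rw [← prod_const]
  exact prod_le_prod (fun k hk => by linarith [(hp k hk).2]) (fun k hk => by linarith [(hp k hk).1])

theorem div_add_one_div_mul_one_add_le {x y α P β : ℝ} (hxy : x ≤ y) (hy : 0 ≤ y)
    (hα : 0 ≤ α) (hP₀ : 0 < P) (hP₁ : P ≤ 1) (hβ : 0 ≤ β) :
    x / ((α + 1 / P) * (1 + β)) ≤ y / (α + 1) := by
  have hP : α + 1 ≤ α + 1 / P := by linarith [one_le_one_div hP₀ hP₁]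
  have hden : α + 1 ≤ (α + 1 / P) * (1 + β) :=
    hP.trans (le_mul_of_one_le_right (by linarith) (by linarith))
  calc x / ((α + 1 / P) * (1 + β)) ≤ y / ((α + 1 / P) * (1 + β)) :=
        div_le_div_of_nonneg_right hxy (by linarith)
    _ ≤ y / (α + 1) := div_le_div_of_nonneg_left hy (by linarith) hden

section BestResponse

variable {ι : Type*} [Fintype ι] [DecidableEq ι] {α c : ℝ} {p : ι → ℝ} {ℓ j : ι}
  {pbr : (ι → ℝ) → ℝ}

theorem deriv_bestResponse_update (hα : 0 ≤ α) (hc : 0 ≤ c) (hp : ∀ k, p k ∈ Set.Ioo 0 1)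
    (hjℓ : j ≠ ℓ) (hP : 0 < pbr p)
    (heq : ∀ x : ι → ℝ, (∀ k, x k ∈ Set.Ioo 0 1) →
      exp (-α * pbr x) = pbr x * (1 + c * ∏ k ∈ univ \ {ℓ}, (1 - x k)))
    (hdiff : DifferentiableAt ℝ (fun t => pbr (Function.update p j t)) (p j)) :
    deriv (fun t => pbr (Function.update p j t)) (p j)
      = c * (∏ k ∈ univ \ {ℓ, j}, (1 - p k))
          / ((α + 1 / pbr p) * (1 + c * ∏ k ∈ univ \ {ℓ}, (1 - p k))) := by
  set C := ∏ k ∈ univ \ {ℓ, j}, (1 - p k)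
  have hsplit : ∀ x : ι → ℝ, ∏ k ∈ univ \ {ℓ}, (1 - x k)
      = (1 - x j) * ∏ k ∈ univ \ {ℓ, j}, (1 - x k) :=
    fun x => prod_sdiff_singleton_eq_mul_prod_sdiff_pair _ _ (mem_univ j) hjℓ
  have hC : ∀ t, ∏ k ∈ univ \ {ℓ, j}, (1 - Function.update p j t k) = C :=
    fun t => prod_congr rfl fun k hk => by
      rw [Function.update_of_ne (by simp at hk; tauto)]
  have hline : ∀ᶠ t in nhds (p j), exp (-α * pbr (Function.update p j t))
      = pbr (Function.update p j t) * (1 + c * C * (1 - t)) := by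
    filter_upwards [Ioo_mem_nhds (hp j).1 (hp j).2] with t ht
    have hx : ∀ k, Function.update p j t k ∈ Set.Ioo 0 1 := fun k => by
      rcases eq_or_ne k j with rfl | hk
      · simpa using ht
      · simpa [Function.update_of_ne hk] using hp k
    rw [heq _ hx, hsplit, hC, Function.update_self]
    ring
  have hkey := hdiff.hasDerivAt.implicit_exp_neg_mul_eq_mul_affine
    (by simpa using hP.ne') hline
  simp only [Function.update_eq_self] at hkey
  have hden : 0 < (α + 1 / pbr p) * (1 + c * ∏ k ∈ univ \ {ℓ}, (1 - p k)) := by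
    have : 0 ≤ ∏ k ∈ univ \ {ℓ}, (1 - p k) :=
      prod_nonneg fun k _ => by linarith [(hp k).2]
    positivity
  rw [eq_div_iff hden.ne', hsplit]
  linear_combination hkey

end BestResponse

theorem stmt_14_general (N : ℕ) (α ρ q : ℝ) (hα : 0 < α)
    (hq : q ∈ Set.Ioo (0 : ℝ) 1)
    (p : Fin N → ℝ) (hp : ∀ k, p k ∈ Set.Ico q 1)
    (ℓ : Fin N)
    (b : (Fin N → ℝ) → ℝ)
    (hb : ∀ x, b x = Real.exp ρ * (∏ k ∈ Finset.univ \ {ℓ}, (1 - x k))⁻¹)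
    (pbr : (Fin N → ℝ) → ℝ)
    (hrange : ∀ x : Fin N → ℝ, (∀ k, x k ∈ Set.Ioo (0 : ℝ) 1) →
      pbr x ∈ Set.Ioo (0 : ℝ) 1)
    (heq : ∀ x : Fin N → ℝ, (∀ k, x k ∈ Set.Ioo (0 : ℝ) 1) →
      Real.exp (-α * pbr x) = pbr x * (1 + 1 / b x))
    (hdiff : ∀ j : Fin N, DifferentiableAt ℝ (fun t => pbr (Function.update p j t)) (p j)) :
    (∀ j : Fin N, j ≠ ℓ →
      deriv (fun t => pbr (Function.update p j t)) (p j)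
        = Real.exp (-ρ) * (∏ k ∈ Finset.univ \ {ℓ, j}, (1 - p k))
            / ((α + 1 / pbr p) * (1 + 1 / b p))) ∧
    ∑ j ∈ Finset.univ \ {ℓ}, deriv (fun t => pbr (Function.update p j t)) (p j)
      ≤ ((N : ℝ) - 1) * (1 - q) ^ (N - 2) / (Real.exp ρ * (α + 1)) := by
  have hp₀₁ : ∀ k, p k ∈ Set.Ioo 0 1 := fun k => ⟨hq.1.trans_le (hp k).1, (hp k).2⟩
  have hP := hrange p hp₀₁
  have hinv_b : ∀ x, 1 / b x = exp (-ρ) * ∏ k ∈ univ \ {ℓ}, (1 - x k) := fun x => by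
    rw [hb, one_div, mul_inv, inv_inv, exp_neg]
  have hderiv : ∀ j, j ≠ ℓ → deriv (fun t => pbr (Function.update p j t)) (p j)
      = exp (-ρ) * (∏ k ∈ univ \ {ℓ, j}, (1 - p k)) / ((α + 1 / pbr p) * (1 + 1 / b p)) :=
    fun j hj => by
      rw [hinv_b]
      exact deriv_bestResponse_update hα.le (exp_pos _).le hp₀₁ hj hP.1
        (fun x hx => by rw [heq x hx, hinv_b]) (hdiff j)
  refine ⟨hderiv, ?_⟩
  have hterm : ∀ j ∈ (univ \ {ℓ} : Finset (Fin N)),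
      deriv (fun t => pbr (Function.update p j t)) (p j)
        ≤ (1 - q) ^ (N - 2) / (exp ρ * (α + 1)) := by
    intro j hj
    have hjℓ : j ≠ ℓ := by simpa using hj
    have hcard : #(univ \ {ℓ, j}) = N - 2 := by
      rw [card_univ_sdiff, card_pair hjℓ.symm, Fintype.card_fin]
    have hprod : ∏ k ∈ univ \ {ℓ, j}, (1 - p k) ≤ (1 - q) ^ (N - 2) :=
      hcard ▸ prod_one_sub_le_pow_card _ fun k _ => hp k
    have hβ : 0 ≤ 1 / b p := by
      rw [hinv_b]
      exact mul_nonneg (exp_pos _).le (prod_nonneg fun k _ => by linarith [(hp₀₁ k).2])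
    have hrhs : (1 - q) ^ (N - 2) / (exp ρ * (α + 1))
        = exp (-ρ) * (1 - q) ^ (N - 2) / (α + 1) := by
      rw [exp_neg]; field_simp
    rw [hderiv j hjℓ, hrhs]
    exact div_add_one_div_mul_one_add_le (mul_le_mul_of_nonneg_left hprod (exp_pos _).le)
      (mul_nonneg (exp_pos _).le (pow_nonneg (by linarith [hq.2]) _)) hα.le hP.1 hP.2.le hβ
  calc ∑ j ∈ univ \ {ℓ}, deriv (fun t => pbr (Function.update p j t)) (p j)
      ≤ #(univ \ {ℓ}) • ((1 - q) ^ (N - 2) / (exp ρ * (α + 1))) :=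
        sum_le_card_nsmul _ _ _ hterm
    _ = ((N : ℝ) - 1) * (1 - q) ^ (N - 2) / (exp ρ * (α + 1)) := by
      rw [card_univ_sdiff, Finset.card_singleton, Fintype.card_fin, nsmul_eq_mul,
        Nat.cast_sub ℓ.pos, Nat.cast_one, mul_div_assoc]

theorem stmt_14 (N : ℕ) (hN : 2 ≤ N) (α ρ q : ℝ) (hα : 0 < α) (hρ : 0 < ρ)
    (hq : q ∈ Set.Ioo (0 : ℝ) 1)
    (p : Fin N → ℝ) (hp : ∀ k, p k ∈ Set.Ico q 1)
    (ℓ : Fin N)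
    (b : (Fin N → ℝ) → ℝ)
    (hb : ∀ x, b x = Real.exp ρ * (∏ k ∈ Finset.univ \ {ℓ}, (1 - x k))⁻¹)
    (pbr : (Fin N → ℝ) → ℝ)
    (hrange : ∀ x : Fin N → ℝ, (∀ k, x k ∈ Set.Ioo (0 : ℝ) 1) →
      pbr x ∈ Set.Ioo (0 : ℝ) 1)
    (heq : ∀ x : Fin N → ℝ, (∀ k, x k ∈ Set.Ioo (0 : ℝ) 1) →
      Real.exp (-α * pbr x) = pbr x * (1 + 1 / b x))
    (hdiff : ∀ j : Fin N, DifferentiableAt ℝ (fun t => pbr (Function.update p j t)) (p j)) :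
    (∀ j : Fin N, j ≠ ℓ →
      deriv (fun t => pbr (Function.update p j t)) (p j)
        = Real.exp (-ρ) * (∏ k ∈ Finset.univ \ {ℓ, j}, (1 - p k))
            / ((α + 1 / pbr p) * (1 + 1 / b p))) ∧
    ∑ j ∈ Finset.univ \ {ℓ}, deriv (fun t => pbr (Function.update p j t)) (p j)
      ≤ ((N : ℝ) - 1) * (1 - q) ^ (N - 2) / (Real.exp ρ * (α + 1)) :=
  stmt_14_general N α ρ q hα hq p hp ℓ b hb pbr hrange heq hdiff
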